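/- Let Sₕ⁻(ξ) ∈ ℂ³ have components -(1/(ih))(e^{-ihξⱼ}-1), j = 1,2,3, and let Sₕ⁺(ξ) be its componentwise complex conjugate. Then the smallest eigenvalue of the Hermitian matrix (1 + (m + fₕ(ξ))²)·I + (Sₕ⁻(ξ)·σ)(Sₕ⁺(ξ)·σ) equals 1 + (m + fₕ(ξ))² + |Sₕ⁻(ξ)|² - |Sₕ⁻(ξ) × conj(Sₕ⁻(ξ))|. -/

import Mathlib

open scoped ComplexOrder
open Matrix

noncomputable def pauli1 : Matrix (Fin 2) (Fin 2) ℂ := !![0, 1; 1, 0]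
noncomputable def pauli2 : Matrix (Fin 2) (Fin 2) ℂ := !![0, -Complex.I; Complex.I, 0]
noncomputable def pauli3 : Matrix (Fin 2) (Fin 2) ℂ := !![1, 0; 0, -1]

noncomputable def dotSigma (U : Fin 3 → ℂ) : Matrix (Fin 2) (Fin 2) ℂ :=
  U 0 • pauli1 + U 1 • pauli2 + U 2 • pauli3

noncomputable def Sminus (h : ℝ) (ξ : Fin 3 → ℝ) : Fin 3 → ℂ :=
  fun j => -(1 / (Complex.I * h)) * (Complex.exp (-(Complex.I) * h * ξ j) - 1)

noncomputable def Splus (h : ℝ) (ξ : Fin 3 → ℝ) : Fin 3 → ℂ :=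
  fun j => (starRingEnd ℂ) (Sminus h ξ j)

noncomputable def vnorm (v : Fin 3 → ℂ) : ℝ :=
  Real.sqrt (∑ j, ‖v j‖ ^ 2)

noncomputable def fh3 (h : ℝ) (ξ : Fin 3 → ℝ) : ℝ :=
  ∑ j, 4 / h * Real.sin (h * ξ j / 2) ^ 2

lemma vnorm_nonneg (v : Fin 3 → ℂ) : 0 ≤ vnorm v := Real.sqrt_nonneg _

lemma vnorm_sq (v : Fin 3 → ℂ) : vnorm v ^ 2 = ∑ j, ‖v j‖ ^ 2 :=
  Real.sq_sqrt (Finset.sum_nonneg fun _ _ => sq_nonneg _)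

/-- the generic matrix `r•I - v·σ` for a real vector `v` with `|v| = r`. -/
noncomputable def Qmat (r v0 v1 v2 : ℝ) : Matrix (Fin 2) (Fin 2) ℂ :=
  !![((r - v2 : ℝ) : ℂ), (-v0 : ℝ) + (v1 : ℝ) * Complex.I;
     (-v0 : ℝ) - (v1 : ℝ) * Complex.I, ((r + v2 : ℝ) : ℂ)]

lemma Qmat_herm (r v0 v1 v2 : ℝ) : (Qmat r v0 v1 v2).IsHermitian := by
  rw [Matrix.IsHermitian]
  ext i j
  fin_cases i <;> fin_cases j <;>
    simp [Qmat, Matrix.conjTranspose_apply, Complex.ext_iff]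

lemma Qmat_det (r v0 v1 v2 : ℝ) (hr2 : r ^ 2 = v0 ^ 2 + v1 ^ 2 + v2 ^ 2) :
    (Qmat r v0 v1 v2).det = 0 := by
  rw [Qmat, Matrix.det_fin_two_of]
  simp only [Complex.ext_iff, Complex.sub_re, Complex.sub_im, Complex.mul_re, Complex.mul_im,
    Complex.add_re, Complex.add_im, Complex.ofReal_re, Complex.ofReal_im, Complex.I_re,
    Complex.I_im, Complex.zero_re, Complex.zero_im, Complex.neg_re, Complex.neg_im]
  constructor
  · linear_combination hr2
  · ring

set_option maxHeartbeats 1000000 in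
lemma Qmat_sq (r v0 v1 v2 : ℝ) (hr2 : r ^ 2 = v0 ^ 2 + v1 ^ 2 + v2 ^ 2) :
    Qmat r v0 v1 v2 * Qmat r v0 v1 v2 = ((2 * r : ℝ) : ℂ) • Qmat r v0 v1 v2 := by
  ext i j
  fin_cases i <;> fin_cases j <;>
    simp [Qmat, Matrix.mul_apply, Fin.sum_univ_succ, Complex.ext_iff] <;>
    first
      | ring1
      | linear_combination hr2
      | linear_combination (-1 : ℝ) * hr2
      | (constructor <;>
          first
            | trivial
            | ring1
            | linear_combination hr2
            | linear_combination (-1 : ℝ) * hr2)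

lemma Qmat_posSemidef (r v0 v1 v2 : ℝ) (hr0 : 0 ≤ r)
    (hr2 : r ^ 2 = v0 ^ 2 + v1 ^ 2 + v2 ^ 2) : (Qmat r v0 v1 v2).PosSemidef := by
  rcases eq_or_lt_of_le hr0 with hr | hr
  · have hsum : v0 ^ 2 + v1 ^ 2 + v2 ^ 2 = 0 := by rw [← hr2, ← hr]; ring
    have h0 : v0 = 0 := by nlinarith [sq_nonneg v0, sq_nonneg v1, sq_nonneg v2]
    have h1 : v1 = 0 := by nlinarith [sq_nonneg v0, sq_nonneg v1, sq_nonneg v2]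
    have h2 : v2 = 0 := by nlinarith [sq_nonneg v0, sq_nonneg v1, sq_nonneg v2]
    have hz : Qmat r v0 v1 v2 = 0 := by
      rw [← hr, h0, h1, h2, Qmat]
      ext i j; fin_cases i <;> fin_cases j <;> simp
    rw [hz]
    exact Matrix.PosSemidef.zero
  · set t := Real.sqrt (1 / (2 * r)) with htdef
    have ht2 : t ^ 2 = 1 / (2 * r) := Real.sq_sqrt (by positivity)
    have hB : ((t : ℂ) • Qmat r v0 v1 v2)ᴴ * ((t : ℂ) • Qmat r v0 v1 v2)
        = Qmat r v0 v1 v2 := by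
      rw [Matrix.conjTranspose_smul, (Qmat_herm r v0 v1 v2).eq, Matrix.smul_mul,
        Matrix.mul_smul, smul_smul, Qmat_sq r v0 v1 v2 hr2, smul_smul]
      have hone : star (t : ℂ) * (t : ℂ) * ((2 * r : ℝ) : ℂ) = 1 := by
        rw [Complex.star_def, Complex.conj_ofReal, ← Complex.ofReal_mul, ← Complex.ofReal_mul,
          ← sq, ht2, Complex.ofReal_eq_one]
        field_simp
      rw [hone, one_smul]
    exact hB ▸ Matrix.posSemidef_conjTranspose_mul_self _

section key
variable (a : Fin 3 → ℂ)

noncomputable def vv : Fin 3 → ℝ :=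
  ![2 * ((a 1).im * (a 2).re - (a 1).re * (a 2).im),
    2 * ((a 2).im * (a 0).re - (a 2).re * (a 0).im),
    2 * ((a 0).im * (a 1).re - (a 0).re * (a 1).im)]

lemma cross_abs_sq (j : Fin 3) :
    ‖crossProduct a (fun k => (starRingEnd ℂ) (a k)) j‖ ^ 2 = vv a j ^ 2 := by
  fin_cases j <;>
    simp [crossProduct, vv, Complex.sq_norm, Complex.normSq_apply] <;> ring

lemma r_sq :
    vnorm (crossProduct a (fun k => (starRingEnd ℂ) (a k))) ^ 2
      = vv a 0 ^ 2 + vv a 1 ^ 2 + vv a 2 ^ 2 := by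
  rw [vnorm_sq, Fin.sum_univ_three, cross_abs_sq, cross_abs_sq, cross_abs_sq]

set_option maxHeartbeats 1000000 in
lemma N_eq :
    dotSigma a * dotSigma (fun j => (starRingEnd ℂ) (a j))
      - ((vnorm a ^ 2 - vnorm (crossProduct a (fun k => (starRingEnd ℂ) (a k))) : ℝ) : ℂ)
          • (1 : Matrix (Fin 2) (Fin 2) ℂ)
    = Qmat (vnorm (crossProduct a (fun k => (starRingEnd ℂ) (a k))))
        (vv a 0) (vv a 1) (vv a 2) := by
  have hs := vnorm_sq a
  ext i j
  fin_cases i <;> fin_cases j <;>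
    simp [Qmat, dotSigma, pauli1, pauli2, pauli3, hs, vv, Matrix.mul_apply,
      Fin.sum_univ_succ, Complex.sq_norm, Complex.normSq_apply, Complex.ext_iff] <;>
    constructor <;> ring

lemma key_lemma :
    (dotSigma a * dotSigma (fun j => (starRingEnd ℂ) (a j))
      - ((vnorm a ^ 2 - vnorm (crossProduct a (fun k => (starRingEnd ℂ) (a k))) : ℝ) : ℂ)
          • (1 : Matrix (Fin 2) (Fin 2) ℂ)).PosSemidef ∧
    (dotSigma a * dotSigma (fun j => (starRingEnd ℂ) (a j))
      - ((vnorm a ^ 2 - vnorm (crossProduct a (fun k => (starRingEnd ℂ) (a k))) : ℝ) : ℂ)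
          • (1 : Matrix (Fin 2) (Fin 2) ℂ)).det = 0 := by
  rw [N_eq a]
  exact ⟨Qmat_posSemidef _ _ _ _ (vnorm_nonneg _) (r_sq a),
    Qmat_det _ _ _ _ (r_sq a)⟩
end key

theorem smallest_eigenvalue_formula (h m : ℝ) (hh : 0 < h) (hm : 0 ≤ m)
    (ξ : Fin 3 → ℝ) :
    let M : Matrix (Fin 2) (Fin 2) ℂ :=
      ((1 + (m + fh3 h ξ) ^ 2 : ℝ) : ℂ) • (1 : Matrix (Fin 2) (Fin 2) ℂ)
        + dotSigma (Sminus h ξ) * dotSigma (Splus h ξ)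
    let E : ℝ := 1 + (m + fh3 h ξ) ^ 2 + vnorm (Sminus h ξ) ^ 2
        - vnorm (crossProduct (Sminus h ξ) (Splus h ξ))
    (M - (E : ℂ) • (1 : Matrix (Fin 2) (Fin 2) ℂ)).PosSemidef ∧
      (M - (E : ℂ) • (1 : Matrix (Fin 2) (Fin 2) ℂ)).det = 0 := by
  intro M E
  have hsp : Splus h ξ = fun j => (starRingEnd ℂ) (Sminus h ξ j) := rfl
  have key := key_lemma (Sminus h ξ)
  rw [← hsp] at key
  have hME : M - (E : ℂ) • (1 : Matrix (Fin 2) (Fin 2) ℂ)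
      = dotSigma (Sminus h ξ) * dotSigma (Splus h ξ)
        - ((vnorm (Sminus h ξ) ^ 2
            - vnorm (crossProduct (Sminus h ξ) (Splus h ξ)) : ℝ) : ℂ)
          • (1 : Matrix (Fin 2) (Fin 2) ℂ) := by
    show ((1 + (m + fh3 h ξ) ^ 2 : ℝ) : ℂ) • (1 : Matrix (Fin 2) (Fin 2) ℂ)
        + dotSigma (Sminus h ξ) * dotSigma (Splus h ξ) - (E : ℂ) • _ = _
    have hc : ((E : ℝ) : ℂ) = ((1 + (m + fh3 h ξ) ^ 2 : ℝ) : ℂ)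
        + ((vnorm (Sminus h ξ) ^ 2
            - vnorm (crossProduct (Sminus h ξ) (Splus h ξ)) : ℝ) : ℂ) := by
      show ((1 + (m + fh3 h ξ) ^ 2 + vnorm (Sminus h ξ) ^ 2
        - vnorm (crossProduct (Sminus h ξ) (Splus h ξ)) : ℝ) : ℂ) = _
      push_cast; ring
    rw [hc, add_smul]
    abel
  rw [hME]
  exact key
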